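/- Under the modular setup below, along every sequence (β_n, β̄_n) in (0,∞)² tending to the M* limit (i.e. β_n → 0, β̄_n → ∞, and 𝔟(β_n, β̄_n) → ∞), one has Z̃(β_n, β̄_n) / β_n → 1. -/

import Mathlib

open MeasureTheory Filter

/-- The reduced partition function
`Z̃(β, β̄) = (1-e^{-β})(1-e^{-β̄}) + ∫ e^{-βh - β̄h̄} dμ(h,h̄)`. -/
noncomputable def Ztil (μ : Measure (ℝ × ℝ)) (β βb : ℝ) : ℝ :=
  (1 - Real.exp (-β)) * (1 - Real.exp (-βb)) +
    ∫ p : ℝ × ℝ, Real.exp (-β * p.1 - βb * p.2) ∂μ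

/-- The modular crossing kernel
`K(β, β̄) = (2π/√(ββ̄)) exp(4π²A/β + 4π²A/β̄ - Aβ - Aβ̄)`. -/
noncomputable def Kker (A β βb : ℝ) : ℝ :=
  2 * Real.pi / Real.sqrt (β * βb) *
    Real.exp (4 * Real.pi ^ 2 * A / β + 4 * Real.pi ^ 2 * A / βb - A * β - A * βb)

/-- `𝔟(β, β̄) = β̄ - 4π²A/(Tβ) + (3/(2T)) log β`. -/
noncomputable def bfrak (A T β βb : ℝ) : ℝ :=
  βb - 4 * Real.pi ^ 2 * A / (T * β) + 3 / (2 * T) * Real.log β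

/-!
Split `Z̃ = vacuum + ∫`. The vacuum term `(1 - e^{-β})(1 - e^{-β̄})` is `~ β` as `β → 0`,
`β̄ → ∞`. For the integral, the gap `h̄ ≥ T` trades `β̄` for `1` at the cost of `e^{-(β̄-1)T}`;
then `∫ ≤ Z̃(β, 1) = K(β, 1) Z̃(4π²/β, 4π²)`, and for `β ≤ 1` the dual `Z̃` is bounded by
`1 + ∫ e^{-4π²(h + h̄)}`, while `K(β, 1) ≲ β^{-1/2} e^{4π²A/β}`. Altogether
`∫ / β ≲ e^{-T β̄} e^{4π²A/β} β^{-3/2} = e^{-T 𝔟}`, which tends to `0` in the M* limit.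
-/

open Real Topology

noncomputable def spectralIntegral (μ : Measure (ℝ × ℝ)) (β βb : ℝ) : ℝ :=
  ∫ p : ℝ × ℝ, exp (-β * p.1 - βb * p.2) ∂μ

section Bounds

variable {μ : Measure (ℝ × ℝ)} {A T β βb : ℝ}

lemma Ztil_eq_add_spectralIntegral (μ : Measure (ℝ × ℝ)) (β βb : ℝ) :
    Ztil μ β βb = (1 - exp (-β)) * (1 - exp (-βb)) + spectralIntegral μ β βb :=
  rfl

lemma spectralIntegral_nonneg : 0 ≤ spectralIntegral μ β βb :=
  integral_nonneg fun _ => (exp_pos _).le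

lemma one_sub_exp_neg_nonneg {x : ℝ} (hx : 0 ≤ x) : 0 ≤ 1 - exp (-x) := by
  simpa using exp_le_one_iff.2 (neg_nonpos.2 hx)

lemma one_sub_exp_neg_le_one (x : ℝ) : 1 - exp (-x) ≤ 1 := by
  linarith [exp_pos (-x)]

lemma spectralIntegral_le_Ztil (hβ : 0 ≤ β) (hβb : 0 ≤ βb) :
    spectralIntegral μ β βb ≤ Ztil μ β βb := by
  rw [Ztil_eq_add_spectralIntegral]
  linarith [mul_nonneg (one_sub_exp_neg_nonneg hβ) (one_sub_exp_neg_nonneg hβb)]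

lemma Ztil_nonneg (hβ : 0 ≤ β) (hβb : 0 ≤ βb) : 0 ≤ Ztil μ β βb :=
  spectralIntegral_nonneg.trans (spectralIntegral_le_Ztil hβ hβb)

lemma Ztil_le_one_add_spectralIntegral (hβ : 0 ≤ β) :
    Ztil μ β βb ≤ 1 + spectralIntegral μ β βb := by
  rw [Ztil_eq_add_spectralIntegral]
  have := mul_le_mul_of_nonneg_left (one_sub_exp_neg_le_one βb) (one_sub_exp_neg_nonneg hβ)
  linarith [one_sub_exp_neg_le_one β]

lemma spectralIntegral_le_exp_mul {β' βb' : ℝ} (hae : ∀ᵐ p ∂μ, T ≤ p.1 ∧ T ≤ p.2)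
    (hβ : β ≤ β') (hβb : βb ≤ βb')
    (hint : Integrable (fun p : ℝ × ℝ => exp (-β * p.1 - βb * p.2)) μ)
    (hint' : Integrable (fun p : ℝ × ℝ => exp (-β' * p.1 - βb' * p.2)) μ) :
    spectralIntegral μ β' βb' ≤
      exp (-((β' - β + (βb' - βb)) * T)) * spectralIntegral μ β βb := by
  rw [spectralIntegral, spectralIntegral, ← integral_const_mul]
  refine integral_mono_ae hint' (hint.const_mul _) ?_
  filter_upwards [hae] with p ⟨hp₁, hp₂⟩
  rw [← exp_add]
  refine exp_le_exp.2 ?_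
  nlinarith [mul_nonneg (sub_nonneg.2 hβ) (sub_nonneg.2 hp₁),
    mul_nonneg (sub_nonneg.2 hβb) (sub_nonneg.2 hp₂)]

lemma Kker_le (hA : 0 ≤ A) (hβ : 0 ≤ β) (hβb : 0 ≤ βb) :
    Kker A β βb ≤ 2 * π / √(β * βb) *
      exp (4 * π ^ 2 * A / β + 4 * π ^ 2 * A / βb) := by
  rw [Kker]
  gcongr
  nlinarith [mul_nonneg hA hβ, mul_nonneg hA hβb]

lemma exp_neg_mul_bfrak (hT : T ≠ 0) (hβ : 0 < β) :
    exp (-(T * bfrak A T β βb)) = exp (-(T * βb)) * exp (4 * π ^ 2 * A / β) / (√β * β) := by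
  have hsqrt : √β * β = exp (3 / 2 * log β) := by
    rw [show 3 / 2 * log β = log β * (1 / 2) + log β by ring, exp_add, exp_log hβ,
      ← rpow_def_of_pos hβ, ← sqrt_eq_rpow]
  rw [hsqrt, ← exp_add, ← exp_sub, bfrak]
  congr 1
  field_simp
  ring

lemma spectralIntegral_div_le (hA : 0 ≤ A) (hT : 0 < T) (hae : ∀ᵐ p ∂μ, T ≤ p.1 ∧ T ≤ p.2)
    (hint : ∀ β βb : ℝ, 0 < β → 0 < βb →
      Integrable (fun p : ℝ × ℝ => exp (-β * p.1 - βb * p.2)) μ)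
    (hmod : ∀ β βb : ℝ, 0 < β → 0 < βb →
      Ztil μ β βb = Kker A β βb * Ztil μ (4 * π ^ 2 / β) (4 * π ^ 2 / βb))
    {β βb : ℝ} (hβ : 0 < β) (hβ1 : β ≤ 1) (hβb : 1 ≤ βb) :
    spectralIntegral μ β βb / β ≤
      2 * π * exp (4 * π ^ 2 * A + T) * (1 + spectralIntegral μ (4 * π ^ 2) (4 * π ^ 2)) *
        exp (-(T * bfrak A T β βb)) := by
  set E := 4 * π ^ 2 with hE
  have hE0 : 0 < E := by positivity
  have hdual : Ztil μ (E / β) (E / 1) ≤ 1 + spectralIntegral μ E E := by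
    have hEβ : E ≤ E / β := le_div_self hE0.le hβ hβ1
    calc Ztil μ (E / β) (E / 1)
        ≤ 1 + spectralIntegral μ (E / β) E := by
          simpa using Ztil_le_one_add_spectralIntegral (μ := μ) (βb := E) (by positivity)
      _ ≤ 1 + exp (-((E / β - E + (E - E)) * T)) * spectralIntegral μ E E := by
          gcongr
          exact spectralIntegral_le_exp_mul hae hEβ le_rfl (hint E E hE0 hE0)
            (hint _ _ (by positivity) hE0)
      _ ≤ 1 + spectralIntegral μ E E := by
          gcongr
          exact mul_le_of_le_one_left spectralIntegral_nonneg
            (exp_le_one_iff.2 (by nlinarith))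
  have hbound : spectralIntegral μ β βb ≤
      exp (-((βb - 1) * T)) * (2 * π / √β * exp (E * A / β + E * A)) *
        (1 + spectralIntegral μ E E) :=
    calc spectralIntegral μ β βb
        ≤ exp (-((β - β + (βb - 1)) * T)) * spectralIntegral μ β 1 :=
          spectralIntegral_le_exp_mul hae le_rfl hβb (hint β 1 hβ one_pos)
            (hint β βb hβ (one_pos.trans_le hβb))
      _ ≤ exp (-((βb - 1) * T)) * (Kker A β 1 * Ztil μ (E / β) (E / 1)) := by
          rw [sub_self, zero_add, ← hmod β 1 hβ one_pos]
          gcongr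
          exact spectralIntegral_le_Ztil hβ.le zero_le_one
      _ ≤ exp (-((βb - 1) * T)) * (2 * π / √β * exp (E * A / β + E * A)) *
            (1 + spectralIntegral μ E E) := by
          rw [mul_assoc]
          gcongr
          · exact Ztil_nonneg (by positivity) (by positivity)
          · simpa using Kker_le (A := A) hA hβ.le zero_le_one
  calc spectralIntegral μ β βb / β
      ≤ exp (-((βb - 1) * T)) * (2 * π / √β * exp (E * A / β + E * A)) *
          (1 + spectralIntegral μ E E) / β := by gcongr
    _ = 2 * π * exp (E * A + T) * (1 + spectralIntegral μ E E) *
          exp (-(T * bfrak A T β βb)) := by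
        rw [exp_neg_mul_bfrak hT.ne' hβ, show -((βb - 1) * T) = -(T * βb) + T by ring, exp_add,
          exp_add, exp_add]
        have : √β ≠ 0 := (sqrt_pos.2 hβ).ne'
        field_simp
        rw [hE]
        ring_nf

end Bounds

lemma tendsto_one_sub_exp_neg_div :
    Tendsto (fun x : ℝ => (1 - exp (-x)) / x) (𝓝[≠] 0) (𝓝 1) := by
  have hderiv : HasDerivAt (fun x : ℝ => 1 - exp (-x)) 1 0 := by
    simpa using ((hasDerivAt_neg (0 : ℝ)).exp).const_sub 1
  refine (hasDerivAt_iff_tendsto_slope.mp hderiv).congr fun x => ?_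
  simp [slope_def_field]

lemma tendsto_vacuum_div {ι : Type*} {l : Filter ι} {β βb : ι → ℝ}
    (hβ : Tendsto β l (𝓝[≠] 0)) (hβb : Tendsto βb l atTop) :
    Tendsto (fun i => (1 - exp (-β i)) * (1 - exp (-βb i)) / β i) l (𝓝 1) := by
  have hβb' : Tendsto (fun i => 1 - exp (-βb i)) l (𝓝 1) := by
    simpa using tendsto_const_nhds.sub (tendsto_exp_neg_atTop_nhds_zero.comp hβb)
  simpa [div_mul_eq_mul_div] using (tendsto_one_sub_exp_neg_div.comp hβ).mul hβb'

lemma tendsto_spectralIntegral_div {μ : Measure (ℝ × ℝ)} {A T : ℝ} (hA : 0 ≤ A) (hT : 0 < T)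
    (hae : ∀ᵐ p ∂μ, T ≤ p.1 ∧ T ≤ p.2)
    (hint : ∀ β βb : ℝ, 0 < β → 0 < βb →
      Integrable (fun p : ℝ × ℝ => exp (-β * p.1 - βb * p.2)) μ)
    (hmod : ∀ β βb : ℝ, 0 < β → 0 < βb →
      Ztil μ β βb = Kker A β βb * Ztil μ (4 * π ^ 2 / β) (4 * π ^ 2 / βb))
    {ι : Type*} {l : Filter ι} {β βb : ι → ℝ}
    (hβ : Tendsto β l (𝓝[>] 0)) (hβb : Tendsto βb l atTop)
    (hM : Tendsto (fun i => bfrak A T (β i) (βb i)) l atTop) :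
    Tendsto (fun i => spectralIntegral μ (β i) (βb i) / β i) l (𝓝 0) := by
  have hdecay : Tendsto (fun i => exp (-(T * bfrak A T (β i) (βb i)))) l (𝓝 0) :=
    tendsto_exp_neg_atTop_nhds_zero.comp (hM.const_mul_atTop hT)
  apply squeeze_zero'
  · filter_upwards [hβ self_mem_nhdsWithin] with i (hi : 0 < β i)
    exact div_nonneg spectralIntegral_nonneg hi.le
  · filter_upwards [hβ self_mem_nhdsWithin,
      (tendsto_nhds_of_tendsto_nhdsWithin hβ).eventually (gt_mem_nhds one_pos),
      hβb.eventually_ge_atTop 1] with i (hβ₀ : 0 < β i) hβ₁ hβb₁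
    exact spectralIntegral_div_le hA hT hae hint hmod hβ₀ hβ₁.le hβb₁
  · simpa using hdecay.const_mul _

theorem stmt13_general (A T : ℝ) (hA : 0 < A) (hT : 0 < T) (μ : Measure (ℝ × ℝ))
    (hsupp : μ {p : ℝ × ℝ | p.1 < T ∨ p.2 < T} = 0)
    (hint : ∀ β βb : ℝ, 0 < β → 0 < βb →
      Integrable (fun p : ℝ × ℝ => Real.exp (-β * p.1 - βb * p.2)) μ)
    (hmod : ∀ β βb : ℝ, 0 < β → 0 < βb →
      Ztil μ β βb = Kker A β βb * Ztil μ (4 * Real.pi ^ 2 / β) (4 * Real.pi ^ 2 / βb))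
    (β βb : ℕ → ℝ) (hβpos : ∀ n, 0 < β n)
    (hβ0 : Tendsto β atTop (nhds 0)) (hβb : Tendsto βb atTop atTop)
    (hM : Tendsto (fun n => bfrak A T (β n) (βb n)) atTop atTop) :
    Tendsto (fun n => Ztil μ (β n) (βb n) / β n) atTop (nhds 1) := by
  have hae : ∀ᵐ p ∂μ, T ≤ p.1 ∧ T ≤ p.2 := by
    simpa only [ae_iff, not_and_or, not_le] using hsupp
  have hβ : Tendsto β atTop (𝓝[>] 0) := tendsto_nhdsWithin_iff.2 ⟨hβ0, .of_forall hβpos⟩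
  have hvac := tendsto_vacuum_div (tendsto_nhdsWithin_mono_right (by simp) hβ) hβb
  have hbulk := tendsto_spectralIntegral_div hA.le hT hae hint hmod hβ hβb hM
  simpa only [Ztil_eq_add_spectralIntegral, add_div, add_zero] using hvac.add hbulk

/-- direct-channel vacuum dominance, Eq. (3.15): in the M* limit
(`β → 0`, `β̄ → ∞`, `𝔟(β,β̄) → ∞`), one has `Z̃(β, β̄)/β → 1`. -/
theorem stmt13 (A T : ℝ) (hA : 0 < A) (hT : 0 < T) (μ : Measure (ℝ × ℝ))
    (hsupp : μ {p : ℝ × ℝ | p.1 < T ∨ p.2 < T} = 0)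
    (hint : ∀ β βb : ℝ, 0 < β → 0 < βb →
      Integrable (fun p : ℝ × ℝ => Real.exp (-β * p.1 - βb * p.2)) μ)
    (hmod : ∀ β βb : ℝ, 0 < β → 0 < βb →
      Ztil μ β βb = Kker A β βb * Ztil μ (4 * Real.pi ^ 2 / β) (4 * Real.pi ^ 2 / βb))
    (β βb : ℕ → ℝ) (hβpos : ∀ n, 0 < β n) (hβbpos : ∀ n, 0 < βb n)
    (hβ0 : Tendsto β atTop (nhds 0)) (hβb : Tendsto βb atTop atTop)
    (hM : Tendsto (fun n => bfrak A T (β n) (βb n)) atTop atTop) :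
    Tendsto (fun n => Ztil μ (β n) (βb n) / β n) atTop (nhds 1) :=
  stmt13_general A T hA hT μ hsupp hint hmod β βb hβpos hβ0 hβb hM
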